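/- For all n and 0 ≤ m < C(n,2), the probability that a uniformly random permutation of [n] with m inversions is indecomposable is at most the probability that a uniformly random permutation of [n] with m+1 inversions is indecomposable. -/

import Mathlib

/-- The number of inversions of `σ`. -/
def invCount {n : ℕ} (σ : Equiv.Perm (Fin n)) : ℕ :=
  (Finset.univ.filter (fun p : Fin n × Fin n => p.1 < p.2 ∧ σ p.2 < σ p.1)).card

/-- `s n m`: the number of permutations of `[n]` with exactly `m` inversions. -/
def s (n m : ℕ) : ℕ :=
  (Finset.univ.filter (fun σ : Equiv.Perm (Fin n) => invCount σ = m)).card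

/-- `σ` is indecomposable. -/
def Indecomposable {n : ℕ} (σ : Equiv.Perm (Fin n)) : Prop :=
  ¬ ∃ k : ℕ, 0 < k ∧ k < n ∧ ∀ i : Fin n, (i : ℕ) < k → (σ i : ℕ) < k

/-!
The Lehmer code `σ ↦ (#{j > i | σ j < σ i})ᵢ` is a bijection from the permutations of `[n]` onto
the lattice points of the box `∏ᵢ [0, n - i)`; it turns the number of inversions into the
coordinate sum and indecomposability into membership in an up-set. It therefore suffices that, for
a uniformly random lattice point of a box and an up-set `U`, the conditional probability of `U`
given that the coordinate sum is `z` is nondecreasing in `z` (Efron's monotonicity theorem for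
sums of independent log-concave variables).

This goes by induction on the dimension. Split off the first coordinate `t`. The counts of the
remaining coordinates form a Pólya frequency sequence of order 2 (a property preserved under
adding a coordinate), so the law of `t` given the sum `z + 1` is obtained from the law of `t`
given the sum `z` by a coupling that moves `t` up by at most one. Along it, either `t` grows by
one or the sum of the remaining coordinates grows by one; both can only increase the conditional
probability of `U`, by the up-set property and by induction.
-/

open Finset

theorem two_mul_sum_mul_sum_sub_sum_mul_sum {R ι : Type*} [CommRing R] (s : Finset ι)
    (a b u v : ι → R) :
    2 * ((∑ k ∈ s, a k * u k) * (∑ l ∈ s, b l * v l) - (∑ k ∈ s, b k * u k) * ∑ l ∈ s, a l * v l)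
      = ∑ k ∈ s, ∑ l ∈ s, (a k * b l - b k * a l) * (u k * v l - u l * v k) := by
  have hswap : ∀ g : ι → ι → R, ∑ k ∈ s, ∑ l ∈ s, g k l = ∑ k ∈ s, ∑ l ∈ s, g l k :=
    fun g => sum_comm
  simp only [sum_mul_sum, mul_sub, sub_mul, sum_sub_distrib]
  rw [hswap fun k l => a k * b l * (u l * v k), hswap fun k l => b k * a l * (u l * v k)]
  simp only [two_mul, sub_eq_add_neg, ← sum_neg_distrib, ← sum_add_distrib]
  refine sum_congr rfl fun k _ => sum_congr rfl fun l _ => ?_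
  ring

section PF2

variable {R : Type*} [Mul R] [LE R]

/-- Pólya frequency of order 2; for nonnegative `f` this is log-concavity without internal
zeros. -/
def IsPF2 (f : ℤ → R) : Prop :=
  ∀ x y : ℤ, x ≤ y → ∀ d : ℕ, f x * f (y + d) ≤ f (x + d) * f y

theorem IsPF2.apply_sub_mul_apply_sub_le {f : ℤ → R} (hf : IsPF2 f) {x y : ℤ} (hxy : x ≤ y)
    {k l : ℕ} (hkl : k ≤ l) : f (x - l) * f (y - k) ≤ f (x - k) * f (y - l) := by
  have := hf (x - l) (y - l) (by omega) (l - k)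
  rw [Nat.cast_sub hkl] at this
  convert this using 3 <;> ring

end PF2

section OrderedRing

variable {R : Type*} [CommRing R] [LinearOrder R] [IsStrictOrderedRing R]

theorem IsPF2.sum_range_sub {f : ℤ → R} (hf : IsPF2 f) (a : ℕ) :
    IsPF2 fun w => ∑ t ∈ range a, f (w - t) := by
  intro x y hxy d
  -- Both windows are written against the kernel `f (· + d - t)`, so that the Binet–Cauchy
  -- identity pairs the TP₂ kernel with the TP₂ pair of weights `c₁, c₂`.
  let c₁ : ℕ → R := fun t => if t < a then 1 else 0
  let c₂ : ℕ → R := fun t => if d ≤ t then 1 else 0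
  have hwin₁ : ∀ w : ℤ,
      ∑ t ∈ range a, f (w + d - t) = ∑ t ∈ range (a + d), c₁ t * f (w + d - t) := by
    intro w
    rw [sum_range_add]
    simp only [c₁, ite_mul, one_mul, zero_mul, add_lt_iff_neg_left, not_lt_zero, if_false,
      sum_const_zero, add_zero]
    exact sum_congr rfl fun t ht => (if_pos (mem_range.mp ht)).symm
  have hwin₂ : ∀ w : ℤ,
      ∑ t ∈ range a, f (w - t) = ∑ t ∈ range (a + d), c₂ t * f (w + d - t) := by
    intro w
    rw [add_comm a, sum_range_add]
    simp only [c₂, ite_mul, one_mul, zero_mul, le_add_iff_nonneg_right, zero_le, if_true,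
      Nat.cast_add]
    rw [sum_eq_zero fun t ht => if_neg (not_le.mpr (mem_range.mp ht)), zero_add]
    exact sum_congr rfl fun t _ => by ring_nf
  have hc : ∀ k l : ℕ, k ≤ l → c₂ k * c₁ l ≤ c₁ k * c₂ l := by
    intro k l hkl
    simp only [c₁, c₂]
    split_ifs <;> norm_num <;> omega
  have hterm : ∀ k l : ℕ, 0 ≤ (c₁ k * c₂ l - c₂ k * c₁ l) *
      (f (x + d - k) * f (y + d - l) - f (x + d - l) * f (y + d - k)) := by
    intro k l
    rcases le_total k l with hkl | hlk
    · exact mul_nonneg (sub_nonneg.mpr (hc k l hkl))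
        (sub_nonneg.mpr (hf.apply_sub_mul_apply_sub_le (by omega) hkl))
    · have := mul_nonneg (sub_nonneg.mpr (hc l k hlk))
        (sub_nonneg.mpr (hf.apply_sub_mul_apply_sub_le (by omega : x + d ≤ y + d) hlk))
      linarith
  have key := two_mul_sum_mul_sum_sub_sum_mul_sum (range (a + d)) c₁ c₂
    (fun t => f (x + d - t)) (fun t => f (y + d - t))
  simp only
  rw [hwin₂ x, hwin₂ y, hwin₁ x, hwin₁ y]
  linarith [sum_nonneg fun k (_ : k ∈ range (a + d)) =>
    sum_nonneg fun l (_ : l ∈ range (a + d)) => hterm k l]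

theorem sum_Ico_mul_sum_range_le_of_ratio_mono {α β : ℕ → R}
    (hαβ : ∀ s t, s ≤ t → α t * β s ≤ α s * β t) (c N : ℕ) :
    (∑ t ∈ Ico c N, α t) * ∑ t ∈ range N, β t ≤ (∑ t ∈ Ico c N, β t) * ∑ t ∈ range N, α t := by
  rcases le_total N c with hNc | hcN
  · simp [Ico_eq_empty_of_le hNc]
  rw [← sum_range_add_sum_Ico β hcN, ← sum_range_add_sum_Ico α hcN]
  have hcross : (∑ t ∈ Ico c N, α t) * ∑ s ∈ range c, β s
      ≤ (∑ t ∈ Ico c N, β t) * ∑ s ∈ range c, α s := by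
    rw [sum_mul_sum, sum_mul_sum]
    refine sum_le_sum fun t ht => sum_le_sum fun s hs => ?_
    rw [mul_comm (β t)]
    exact hαβ s t ((mem_range.mp hs).le.trans (mem_Ico.mp ht).1)
  linarith

theorem sum_Ico_succ_mul_sum_range_le {α β : ℕ → R} (hα : ∀ t, 0 ≤ α t) (hβ : ∀ t, 0 ≤ β t)
    (hβα : ∀ t, β (t + 1) = α t) (c N : ℕ) :
    (∑ t ∈ Ico (c + 1) N, β t) * ∑ t ∈ range N, α t
      ≤ (∑ t ∈ Ico c N, α t) * ∑ t ∈ range N, β t := by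
  have hpos : ∀ s : Finset ℕ, 0 ≤ ∑ t ∈ s, α t := fun s => sum_nonneg fun t _ => hα t
  obtain _ | a := N
  · simp
  rcases lt_or_ge a c with hac | hca
  · rw [Ico_eq_empty_of_le (by omega), sum_empty, zero_mul]
    exact mul_nonneg (hpos _) (sum_nonneg fun t _ => hβ t)
  have htail : ∑ t ∈ Ico (c + 1) (a + 1), β t = ∑ t ∈ Ico c a, α t := by
    rw [← sum_Ico_add' β c a 1]
    exact sum_congr rfl fun t _ => hβα t
  have hβsum : ∑ t ∈ range (a + 1), β t = β 0 + ∑ t ∈ range a, α t := by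
    rw [sum_range_succ', add_comm]
    simp only [hβα]
  have hsub : ∑ t ∈ Ico c a, α t ≤ ∑ t ∈ range a, α t := by
    rw [range_eq_Ico]
    exact sum_le_sum_of_subset_of_nonneg (Ico_subset_Ico_left (Nat.zero_le c))
      fun t _ _ => hα t
  rw [htail, hβsum, sum_range_succ, sum_Ico_succ_top hca]
  nlinarith [mul_nonneg (hpos (Ico c a)) (hβ 0), mul_nonneg (hα a) (sub_nonneg.mpr hsub),
    mul_nonneg (hα a) (hβ 0)]

theorem sum_mul_add_le_sum_mul_add {p q D E : ℕ → R} {N : ℕ} (hD0 : D 0 = 0) (hDN : D N = 0)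
    (hE : ∀ t < N, p t * E t ≤ q t * E t)
    (hD : ∀ t < N, p t * D (t + 1) ≤ q (t + 1) * D (t + 1)) :
    ∑ t ∈ range N, p t * (E t + D (t + 1)) ≤ ∑ t ∈ range N, q t * (D t + E t) := by
  have hshift : ∑ t ∈ range N, q (t + 1) * D (t + 1) = ∑ t ∈ range N, q t * D t := by
    have h₁ := sum_range_succ' (fun t => q t * D t) N
    have h₂ := sum_range_succ (fun t => q t * D t) N
    simp only [hD0, hDN, mul_zero, add_zero] at h₁ h₂
    rw [← h₁, h₂]
  calc ∑ t ∈ range N, p t * (E t + D (t + 1))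
      ≤ ∑ t ∈ range N, (q t * E t + q (t + 1) * D (t + 1)) := by
        refine sum_le_sum fun t ht => ?_
        rw [mul_add]
        exact add_le_add (hE t (mem_range.mp ht)) (hD t (mem_range.mp ht))
    _ = ∑ t ∈ range N, q t * (D t + E t) := by
        rw [sum_add_distrib, hshift, ← sum_add_distrib]
        exact sum_congr rfl fun t _ => by ring

end OrderedRing

section Field

variable {𝕜 : Type*} [Field 𝕜] [LinearOrder 𝕜] [IsStrictOrderedRing 𝕜]

theorem div_mul_le_div_mul_of_le_mul {x y a b w A B : 𝕜} (ha : 0 ≤ a) (hb : 0 ≤ b)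
    (hw : 0 ≤ w) (hwa : w ≤ a * B) (hwb : w ≤ b * A) (h : x * b ≤ y * a) :
    x / a * w ≤ y / b * w := by
  rcases hw.eq_or_lt with rfl | hw
  · simp
  have ha : 0 < a := ha.lt_of_ne (by rintro rfl; simp at hwa; linarith)
  have hb : 0 < b := hb.lt_of_ne (by rintro rfl; simp at hwb; linarith)
  exact mul_le_mul_of_nonneg_right ((div_le_div_iff₀ ha hb).mpr h) hw.le

/-- `hdom` and `hshift` say that `β / B` is obtained from `α / A` by a coupling moving each point
up by at most one step; the conclusion compares the `α`-average of `x / α` with the `β`-average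
of `y / β`. -/
theorem sum_mul_sum_le_of_tail_bounds {α β x y : ℕ → 𝕜} {N : ℕ}
    (hα : ∀ t, 0 ≤ α t) (hβ : ∀ t, 0 ≤ β t)
    (hxα : ∀ t, x t ≤ α t) (hx : ∀ t, 0 ≤ x t) (hyβ : ∀ t, y t ≤ β t) (hy : ∀ t, 0 ≤ y t)
    (hdom : ∀ c, (∑ t ∈ Ico c N, α t) * ∑ t ∈ range N, β t
      ≤ (∑ t ∈ Ico c N, β t) * ∑ t ∈ range N, α t)
    (hshift : ∀ c, (∑ t ∈ Ico (c + 1) N, β t) * ∑ t ∈ range N, α t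
      ≤ (∑ t ∈ Ico c N, α t) * ∑ t ∈ range N, β t)
    (hxy : ∀ t, x t * β t ≤ y t * α t) (hxy' : ∀ t, x t * β (t + 1) ≤ y (t + 1) * α t) :
    (∑ t ∈ range N, x t) * ∑ t ∈ range N, β t ≤ (∑ t ∈ range N, y t) * ∑ t ∈ range N, α t := by
  set A := ∑ t ∈ range N, α t
  set B := ∑ t ∈ range N, β t
  have hA : 0 ≤ A := sum_nonneg fun t _ => hα t
  -- the coupling keeps mass `E t` at `t` and moves mass `D (t + 1)` from `t` to `t + 1`
  set D : ℕ → 𝕜 := fun c => (∑ t ∈ Ico c N, β t) * A - (∑ t ∈ Ico c N, α t) * B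
  set E : ℕ → 𝕜 := fun c => (∑ t ∈ Ico c N, α t) * B - (∑ t ∈ Ico (c + 1) N, β t) * A
  have hD : ∀ c, 0 ≤ D c := fun c => sub_nonneg.mpr (hdom c)
  have hE : ∀ c, 0 ≤ E c := fun c => sub_nonneg.mpr (hshift c)
  have hDN : D N = 0 := by simp [D]
  have hrow : ∀ t < N, E t + D (t + 1) = α t * B := fun t ht => by
    simp only [D, E, sum_eq_sum_Ico_succ_bot ht α]
    ring
  have hcol : ∀ t < N, D t + E t = β t * A := fun t ht => by
    simp only [D, E, sum_eq_sum_Ico_succ_bot ht β]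
    ring
  have hcol' : ∀ t < N, D (t + 1) ≤ β (t + 1) * A := fun t ht => by
    rcases (show t + 1 ≤ N from ht).lt_or_eq with h | h
    · linarith [hcol (t + 1) h, hE (t + 1)]
    · rw [h, hDN]
      exact mul_nonneg (hβ N) hA
  calc (∑ t ∈ range N, x t) * B
      = ∑ t ∈ range N, x t / α t * (E t + D (t + 1)) := by
        rw [sum_mul]
        refine sum_congr rfl fun t ht => ?_
        rw [hrow t (mem_range.mp ht), ← mul_assoc,
          div_mul_cancel_of_imp fun h0 => le_antisymm (h0 ▸ hxα t) (hx t)]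
    _ ≤ ∑ t ∈ range N, y t / β t * (D t + E t) := by
        refine sum_mul_add_le_sum_mul_add (by simp only [D, ← range_eq_Ico, A, B]; ring) hDN
          (fun t ht => ?_) (fun t ht => ?_)
        · exact div_mul_le_div_mul_of_le_mul (A := A) (B := B) (hα t) (hβ t) (hE t)
            (by linarith [hrow t ht, hD (t + 1)]) (by linarith [hcol t ht, hD t]) (hxy t)
        · exact div_mul_le_div_mul_of_le_mul (A := A) (B := B) (hα t) (hβ (t + 1)) (hD (t + 1))
            (by linarith [hrow t ht, hE t]) (hcol' t ht) (hxy' t)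
    _ = (∑ t ∈ range N, y t) * A := by
        rw [sum_mul]
        refine sum_congr rfl fun t ht => ?_
        rw [hcol t (mem_range.mp ht), ← mul_assoc,
          div_mul_cancel_of_imp fun h0 => le_antisymm (h0 ▸ hyβ t) (hy t)]

end Field

open scoped Classical in
noncomputable def boxCount {n : ℕ} (b : Fin n → ℕ) (U : Set (Fin n → ℕ)) (z : ℤ) : ℕ :=
  #{L ∈ Fintype.piFinset fun i => range (b i) | L ∈ U ∧ ∑ i, (L i : ℤ) = z}

section boxCount

variable {n : ℕ}

theorem boxCount_mono (b : Fin n → ℕ) {U V : Set (Fin n → ℕ)} (hUV : U ⊆ V) (z : ℤ) :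
    boxCount b U z ≤ boxCount b V z := by
  unfold boxCount
  refine card_le_card fun L hL => ?_
  simp only [mem_filter] at hL ⊢
  exact ⟨hL.1, hUV hL.2.1, hL.2.2⟩

theorem boxCount_univ_fin_zero (b : Fin 0 → ℕ) (z : ℤ) :
    boxCount b Set.univ z = if z = 0 then 1 else 0 := by
  unfold boxCount
  split_ifs with hz <;> simp [hz, eq_comm]

theorem boxCount_cons (a : ℕ) (b : Fin n → ℕ) (U : Set (Fin (n + 1) → ℕ)) (z : ℤ) :
    boxCount (Fin.cons a b : Fin (n + 1) → ℕ) U z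
      = ∑ t ∈ range a, boxCount b {L | Fin.cons t L ∈ U} (z - t) := by
  classical
  unfold boxCount
  rw [card_eq_sum_card_fiberwise (f := fun L => L 0) (t := range a)]
  · refine sum_congr rfl fun t ht => ?_
    apply card_nbij' Fin.tail (Fin.cons t)
    · intro L hL
      simp only [coe_filter, mem_filter, Set.mem_ofPred_eq, Fintype.mem_piFinset,
        Fin.forall_fin_succ, Fin.cons_zero, Fin.cons_succ, Fin.sum_univ_succ] at hL ⊢
      obtain ⟨⟨⟨-, hLb⟩, hLU, hLz⟩, rfl⟩ := hL
      refine ⟨hLb, by rwa [Fin.cons_self_tail], by rw [← hLz]; simp [Fin.tail]⟩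
    · intro L hL
      simp only [coe_filter, mem_filter, Set.mem_ofPred_eq, Fintype.mem_piFinset,
        Fin.forall_fin_succ, Fin.cons_zero, Fin.cons_succ, Fin.sum_univ_succ] at hL ⊢
      obtain ⟨hLb, hLU, hLz⟩ := hL
      exact ⟨⟨⟨ht, hLb⟩, hLU, by rw [hLz]; ring⟩, trivial⟩
    · intro L hL
      simp only [coe_filter, mem_filter, Set.mem_ofPred_eq] at hL
      rw [← hL.2, Fin.cons_self_tail]
    · intro L _
      exact Fin.tail_cons _ _
  · intro L hL
    simp only [mem_coe, mem_filter, Fintype.mem_piFinset] at hL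
    simpa using hL.1 0

theorem isPF2_boxCount_univ (b : Fin n → ℕ) : IsPF2 fun z => (boxCount b Set.univ z : ℚ) := by
  induction n with
  | zero =>
    intro x y hxy d
    simp only [boxCount_univ_fin_zero]
    split_ifs <;> norm_num <;> omega
  | succ n ih =>
    obtain ⟨a, b, rfl⟩ : ∃ a b', b = (Fin.cons a b' : Fin (n + 1) → ℕ) :=
      ⟨b 0, Fin.tail b, (Fin.cons_self_tail b).symm⟩
    simp only [boxCount_cons, Set.mem_univ, Set.ofPred_true, Nat.cast_sum]
    exact (ih b).sum_range_sub a

theorem boxCount_cons_mul_le (a : ℕ) (b : Fin n → ℕ) {U : Set (Fin (n + 1) → ℕ)}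
    (hU : IsUpperSet U)
    (ih : ∀ V : Set (Fin n → ℕ), IsUpperSet V → ∀ z : ℤ,
      boxCount b V z * boxCount b Set.univ (z + 1) ≤ boxCount b V (z + 1) * boxCount b Set.univ z)
    (z : ℤ) :
    boxCount (Fin.cons a b : Fin (n + 1) → ℕ) U z
        * boxCount (Fin.cons a b : Fin (n + 1) → ℕ) Set.univ (z + 1)
      ≤ boxCount (Fin.cons a b : Fin (n + 1) → ℕ) U (z + 1)
        * boxCount (Fin.cons a b : Fin (n + 1) → ℕ) Set.univ z := by
  set f : ℤ → ℚ := fun r => boxCount b Set.univ r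
  set u : ℕ → ℤ → ℚ := fun t r => boxCount b {L | (Fin.cons t L : Fin (n + 1) → ℕ) ∈ U} r
  have hα : ∀ t : ℕ, 0 ≤ f (z - t) := fun t => Nat.cast_nonneg _
  have hβ : ∀ t : ℕ, 0 ≤ f (z + 1 - t) := fun t => Nat.cast_nonneg _
  have hβα : ∀ t : ℕ, f (z + 1 - (t + 1 : ℕ)) = f (z - t) := fun t => by push_cast; ring_nf
  suffices h : (∑ t ∈ range a, u t (z - t)) * ∑ t ∈ range a, f (z + 1 - t)
      ≤ (∑ t ∈ range a, u t (z + 1 - t)) * ∑ t ∈ range a, f (z - t) by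
    simp only [f, u] at h
    simp only [boxCount_cons, Set.mem_univ, Set.ofPred_true]
    exact_mod_cast h
  refine sum_mul_sum_le_of_tail_bounds hα hβ
    (fun t => Nat.cast_le.mpr (boxCount_mono b (Set.subset_univ _) _)) (fun t => Nat.cast_nonneg _)
    (fun t => Nat.cast_le.mpr (boxCount_mono b (Set.subset_univ _) _)) (fun t => Nat.cast_nonneg _)
    (sum_Ico_mul_sum_range_le_of_ratio_mono (fun t₀ t ht₀ => ?_) · a)
    (sum_Ico_succ_mul_sum_range_le hα hβ hβα · a) (fun t => ?_) (fun t => ?_)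
  · exact (isPF2_boxCount_univ b).apply_sub_mul_apply_sub_le (by omega) ht₀
  · have hV : IsUpperSet {L | (Fin.cons t L : Fin (n + 1) → ℕ) ∈ U} :=
      fun L L' hLL' hL => hU (Fin.cons_le_cons.mpr ⟨le_rfl, hLL'⟩) hL
    have := ih _ hV (z - t)
    rw [show z + 1 - t = z - t + 1 by ring]
    simp only [f, u]
    exact_mod_cast this
  · have hsucc : {L | (Fin.cons t L : Fin (n + 1) → ℕ) ∈ U}
        ⊆ {L | (Fin.cons (t + 1) L : Fin (n + 1) → ℕ) ∈ U} :=
      fun L hL => hU (Fin.cons_le_cons.mpr ⟨Nat.le_succ t, le_rfl⟩) hL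
    have := boxCount_mono b hsucc (z - t)
    rw [hβα]
    refine mul_le_mul_of_nonneg_right ?_ (hα t)
    simp only [u, show z + 1 - ((t + 1 : ℕ) : ℤ) = z - t by push_cast; ring]
    exact_mod_cast this

theorem boxCount_mul_le_of_isUpperSet (b : Fin n → ℕ) {U : Set (Fin n → ℕ)} (hU : IsUpperSet U)
    (z : ℤ) :
    boxCount b U z * boxCount b Set.univ (z + 1)
      ≤ boxCount b U (z + 1) * boxCount b Set.univ z := by
  induction n generalizing z with
  | zero =>
    have hle := boxCount_mono b (Set.subset_univ U) z
    rw [boxCount_univ_fin_zero] at hle ⊢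
    split_ifs at hle ⊢ <;> simp_all
  | succ n ih =>
    obtain ⟨a, b, rfl⟩ : ∃ a b', b = (Fin.cons a b' : Fin (n + 1) → ℕ) :=
      ⟨b 0, Fin.tail b, (Fin.cons_self_tail b).symm⟩
    exact boxCount_cons_mul_le a b hU (fun V hV => ih b hV) z

end boxCount

theorem Finset.strictMonoOn_card_filter_lt {α : Type*} [LinearOrder α] (s : Finset α) :
    StrictMonoOn (fun a => #{x ∈ s | x < a}) s := by
  intro a ha b _ hab
  refine card_lt_card ((ssubset_iff_of_subset ?_).mpr ⟨a, ?_, ?_⟩)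
  · intro x hx
    simp only [mem_filter] at hx ⊢
    exact ⟨hx.1, hx.2.trans hab⟩
  · exact mem_filter.mpr ⟨ha, hab⟩
  · simp

section LehmerCode

variable {n : ℕ}

def lehmerCode (σ : Equiv.Perm (Fin n)) (i : Fin n) : ℕ :=
  #{j | i < j ∧ σ j < σ i}

theorem lehmerCode_lt (σ : Equiv.Perm (Fin n)) (i : Fin n) : lehmerCode σ i < n - i := by
  have h : lehmerCode σ i ≤ #(Ioi i) := card_le_card fun j hj => by
    simp only [mem_filter] at hj
    exact mem_Ioi.mpr hj.2.1
  rw [Fin.card_Ioi] at h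
  omega

theorem invCount_eq_sum_lehmerCode (σ : Equiv.Perm (Fin n)) :
    invCount σ = ∑ i, lehmerCode σ i := by
  simp only [invCount, lehmerCode, card_filter, Fintype.sum_prod_type]

theorem lehmerCode_eq_card_filter_image_Ici (σ : Equiv.Perm (Fin n)) (i : Fin n) :
    lehmerCode σ i = #{v ∈ (Ici i).image σ | v < σ i} := by
  rw [filter_image, card_image_of_injective _ σ.injective, lehmerCode]
  congr 1
  ext j
  simp only [mem_filter, mem_univ, mem_Ici, true_and]
  constructor
  · exact fun h => ⟨h.1.le, h.2⟩
  · rintro ⟨hij, hj⟩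
    exact ⟨hij.lt_of_ne (by rintro rfl; exact lt_irrefl _ hj), hj⟩

theorem lehmerCode_injective : Function.Injective (lehmerCode (n := n)) := by
  intro σ τ h
  ext1 i
  induction i using WellFoundedLT.induction with
  | ind i ih =>
    -- `σ` and `τ` agree below `i`, so they map `Ici i` onto the same set, in which both
    -- `σ i` and `τ i` have rank `lehmerCode σ i`.
    have himage : (Ici i).image σ = (Ici i).image τ := by
      suffices key : ∀ π π' : Equiv.Perm (Fin n), (∀ j < i, π j = π' j) →
          (Ici i).image π ⊆ (Ici i).image π' from
        (key σ τ ih).antisymm (key τ σ fun j hj => (ih j hj).symm)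
      intro π π' hππ' v hv
      obtain ⟨j, hj, rfl⟩ := mem_image.mp hv
      refine mem_image.mpr ⟨π'.symm (π j), mem_Ici.mpr (not_lt.mp fun hlt => ?_), by simp⟩
      have := hππ' _ hlt
      rw [Equiv.apply_symm_apply, π.injective.eq_iff] at this
      exact (mem_Ici.mp hj).not_gt (this ▸ hlt)
    apply (strictMonoOn_card_filter_lt ((Ici i).image σ)).injOn
    · exact mem_image_of_mem σ (mem_Ici.mpr le_rfl)
    · exact himage ▸ mem_image_of_mem τ (mem_Ici.mpr le_rfl)
    · simp only
      rw [← lehmerCode_eq_card_filter_image_Ici, himage, ← lehmerCode_eq_card_filter_image_Ici,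
        h]

theorem card_piFinset_range_sub (n : ℕ) :
    #(Fintype.piFinset fun i : Fin n => range (n - i)) = n.factorial := by
  rw [Fintype.card_piFinset]
  simp only [card_range]
  rw [Fin.prod_univ_eq_prod_range (fun i => n - i), ← Nat.descFactorial_eq_prod_range,
    Nat.descFactorial_self]

theorem image_lehmerCode :
    univ.image lehmerCode = Fintype.piFinset fun i : Fin n => range (n - i) := by
  refine eq_of_subset_of_card_le (image_subset_iff.mpr fun σ _ => ?_) ?_
  · exact Fintype.mem_piFinset.mpr fun i => mem_range.mpr (lehmerCode_lt σ i)
  · rw [card_piFinset_range_sub, card_image_of_injective _ lehmerCode_injective, card_univ,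
      Fintype.card_perm, Fintype.card_fin]

theorem card_filter_lehmerCode (P : (Fin n → ℕ) → Prop) [DecidablePred P] :
    #{σ | P (lehmerCode σ)} = #{L ∈ Fintype.piFinset fun i : Fin n => range (n - i) | P L} := by
  rw [← image_lehmerCode, filter_image, card_image_of_injective _ lehmerCode_injective]

theorem apply_le_add_lehmerCode (σ : Equiv.Perm (Fin n)) (i : Fin n) :
    (σ i : ℕ) ≤ i + lehmerCode σ i := by
  have hcard : #{j | σ j < σ i} = σ i := by
    rw [← Fin.card_Iio (σ i)]
    exact card_nbij' σ σ.symm (fun j hj => by simpa using hj) (fun v hv => by simpa using hv)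
      (fun j _ => by simp) (fun v _ => by simp)
  have hsub : univ.filter (fun j => σ j < σ i)
      ⊆ Iio i ∪ univ.filter (fun j => i < j ∧ σ j < σ i) := by
    intro j hj
    simp only [mem_filter, mem_univ, true_and, mem_union, mem_Iio] at hj ⊢
    rcases lt_trichotomy j i with hji | rfl | hij
    · exact Or.inl hji
    · exact absurd hj (lt_irrefl _)
    · exact Or.inr ⟨hij, hj⟩
  calc (σ i : ℕ) = #{j | σ j < σ i} := hcard.symm
    _ ≤ #(Iio i) + lehmerCode σ i := (card_le_card hsub).trans (card_union_le _ _)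
    _ = i + lehmerCode σ i := by rw [Fin.card_Iio]

theorem lt_of_apply_lt_of_forall_apply_lt {σ : Equiv.Perm (Fin n)} {k : ℕ}
    (hσ : ∀ i : Fin n, (i : ℕ) < k → (σ i : ℕ) < k) {j : Fin n} (hj : (σ j : ℕ) < k) :
    (j : ℕ) < k := by
  set I : Finset (Fin n) := {i | (i : ℕ) < k}
  have himage : I.image σ = I := eq_of_subset_of_card_le
    (image_subset_iff.mpr fun i hi => by simp_all [I]) (card_image_of_injective _ σ.injective).ge
  have : σ j ∈ I := mem_filter.mpr ⟨mem_univ _, hj⟩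
  rw [← himage] at this
  obtain ⟨j', hj', hj'j⟩ := mem_image.mp this
  exact σ.injective hj'j ▸ (mem_filter.mp hj').2

theorem forall_apply_lt_iff_lehmerCode_add_lt (σ : Equiv.Perm (Fin n)) (k : ℕ) :
    (∀ i : Fin n, (i : ℕ) < k → (σ i : ℕ) < k) ↔
      ∀ i : Fin n, (i : ℕ) < k → lehmerCode σ i + i < k := by
  refine ⟨fun hσ i hi => ?_, fun h i hi => ?_⟩
  swap
  · exact (apply_le_add_lehmerCode σ i).trans_lt (by linarith [h i hi])
  have : lehmerCode σ i ≤ #(Ioo (i : ℕ) k) := by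
    refine card_le_card_of_injOn Fin.val (fun j hj => ?_) Fin.val_injective.injOn
    simp only [coe_filter, mem_univ, true_and, Set.mem_ofPred_eq, mem_coe, mem_Ioo] at hj ⊢
    exact ⟨hj.1, lt_of_apply_lt_of_forall_apply_lt hσ
      ((show (σ j : ℕ) < σ i from hj.2).trans (hσ i hi))⟩
  rw [Nat.card_Ioo] at this
  omega

def indecomposableCodes (n : ℕ) : Set (Fin n → ℕ) :=
  {L | ∀ k, 0 < k → k < n → ∃ i : Fin n, (i : ℕ) < k ∧ k ≤ L i + i}

theorem isUpperSet_indecomposableCodes : IsUpperSet (indecomposableCodes n) := by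
  intro L L' hLL' hL k hk hkn
  obtain ⟨i, hik, hki⟩ := hL k hk hkn
  exact ⟨i, hik, hki.trans (Nat.add_le_add_right (hLL' i) i)⟩

theorem indecomposable_iff_lehmerCode_mem (σ : Equiv.Perm (Fin n)) :
    Indecomposable σ ↔ lehmerCode σ ∈ indecomposableCodes n := by
  simp only [Indecomposable, forall_apply_lt_iff_lehmerCode_add_lt, indecomposableCodes,
    Set.mem_ofPred_eq, not_exists, not_and, not_forall, not_lt, exists_prop]

end LehmerCode

open scoped Classical in
theorem card_filter_lehmerCode_mem_invCount_eq {n : ℕ} (U : Set (Fin n → ℕ)) (m : ℕ) :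
    #{σ : Equiv.Perm (Fin n) | lehmerCode σ ∈ U ∧ invCount σ = m}
      = boxCount (fun i : Fin n => n - i) U m := by
  rw [boxCount, ← card_filter_lehmerCode]
  congr 1
  refine filter_congr fun σ _ => ?_
  rw [invCount_eq_sum_lehmerCode, ← Nat.cast_sum, Nat.cast_inj]

theorem indecomposable_probability_monotone_general (n m : ℕ) :
    Nat.card {σ : Equiv.Perm (Fin n) // Indecomposable σ ∧ invCount σ = m} * s n (m + 1)
      ≤ Nat.card {σ : Equiv.Perm (Fin n) // Indecomposable σ ∧ invCount σ = m + 1} * s n m := by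
  classical
  have hindec : ∀ k : ℕ, Nat.card {σ : Equiv.Perm (Fin n) // Indecomposable σ ∧ invCount σ = k}
      = boxCount (fun i : Fin n => n - i) (indecomposableCodes n) k := fun k => by
    rw [Nat.card_eq_fintype_card, Fintype.card_subtype,
      ← card_filter_lehmerCode_mem_invCount_eq]
    simp_rw [indecomposable_iff_lehmerCode_mem]
  have hs : ∀ k : ℕ, s n k = boxCount (fun i : Fin n => n - i) Set.univ k := fun k => by
    rw [s, ← card_filter_lehmerCode_mem_invCount_eq]
    simp
  rw [hindec, hindec, hs, hs, Nat.cast_succ]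
  exact boxCount_mul_le_of_isUpperSet _ isUpperSet_indecomposableCodes m

/-- Monotonicity: the probability that a uniformly random permutation of `[n]` with `m`
inversions is indecomposable is at most that for `m+1` inversions.  Equivalently
(cross-multiplying the two probabilities):
`#\{indecomposable with m inversions\}·s(n,m+1) ≤ #\{indecomposable with m+1 inversions\}·s(n,m)`. -/
theorem indecomposable_probability_monotone (n m : ℕ) (hm : m < n.choose 2) :
    Nat.card {σ : Equiv.Perm (Fin n) // Indecomposable σ ∧ invCount σ = m} * s n (m + 1)
      ≤ Nat.card {σ : Equiv.Perm (Fin n) // Indecomposable σ ∧ invCount σ = m + 1} * s n m :=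
  indecomposable_probability_monotone_general n m
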